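/- Let δ > 0 and let c be a positive integer. Then there exist universal constants c₁, c₂ > 0 such that there is a ReLU network N : ℝ → ℝ of width at most 5, depth at most c₁ · c, and all weights bounded in absolute value by c₂ · 2^c / δ, such that with probability at least 1 − δ over x drawn uniformly from [0,1], N(x) = ⌊x · 2^c⌋. -/

import Mathlib

open scoped BigOperators

noncomputable section

/-- The ReLU activation function. -/
def relu (x : ℝ) : ℝ := max 0 x

/-- One affine layer of a neural network: a weight matrix and a bias vector. -/
structure Layer (nin nout : ℕ) where
  W : Matrix (Fin nout) (Fin nin) ℝ
  b : Fin nout → ℝ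

/-- The affine map computed by a layer. -/
def Layer.affine {nin nout : ℕ} (l : Layer nin nout) (x : Fin nin → ℝ) : Fin nout → ℝ :=
  fun i => (∑ j, l.W i j * x j) + l.b i

/-- A ReLU network: a nonempty sequence of affine layers; ReLU is applied after
every layer except the last one. -/
inductive Net : ℕ → ℕ → Type
  | last {nin nout : ℕ} : Layer nin nout → Net nin nout
  | cons {nin k nout : ℕ} : Layer nin k → Net k nout → Net nin nout

namespace Net

/-- Evaluation of a ReLU network. -/
def eval : {nin nout : ℕ} → Net nin nout → (Fin nin → ℝ) → (Fin nout → ℝ)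
  | _, _, .last l, x => l.affine x
  | _, _, .cons l rest, x => rest.eval (fun i => relu (l.affine x i))

/-- The depth (number of layers) of a network. -/
def depth : {nin nout : ℕ} → Net nin nout → ℕ
  | _, _, .last _ => 1
  | _, _, .cons _ rest => rest.depth + 1

/-- The width of a network: the maximum of the input dimension and all
intermediate layer dimensions. -/
def width : {nin nout : ℕ} → Net nin nout → ℕ
  | nin, _, .last _ => nin
  | nin, _, .cons _ rest => max nin rest.width

/-- The number of parameters of a network: the total number of entries of all
weight matrices and bias vectors. -/
def params : {nin nout : ℕ} → Net nin nout → ℕ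
  | nin, nout, .last _ => nout * nin + nout
  | nin, _, .cons (k := k) _ rest => (k * nin + k) + rest.params

/-- All weights (matrix entries and biases) of the network lie in the set `s`. -/
def weightsIn (s : Set ℝ) : {nin nout : ℕ} → Net nin nout → Prop
  | _, _, .last l => (∀ i j, l.W i j ∈ s) ∧ (∀ i, l.b i ∈ s)
  | _, _, .cons l rest => ((∀ i j, l.W i j ∈ s) ∧ (∀ i, l.b i ∈ s)) ∧ rest.weightsIn s

/-- The bias vector of the output layer of a network. -/
def lastBias : {nin nout : ℕ} → Net nin nout → (Fin nout → ℝ)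
  | _, _, .last l => l.b
  | _, _, .cons _ rest => rest.lastBias

end Net

/-- `BIN a b m` is the integer formed by bits `a` through `b` (1-indexed from the
least significant bit) of the binary representation of `m`. -/
def BIN (a b m : ℕ) : ℕ := (m / 2^(a-1)) % 2^(b - a + 1)

end

noncomputable section Aux

lemma relu_of_nonneg {t : ℝ} (h : 0 ≤ t) : relu t = t := max_eq_right h

lemma relu_of_nonpos {t : ℝ} (h : t ≤ 0) : relu t = 0 := max_eq_left h

/-- Input layer: x ↦ (x, 0). -/
def lI : Layer 1 2 := ⟨Matrix.of ![![1], ![0]], ![0, 0]⟩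

/-- Bit-computing layer. -/
def lA (ε : ℝ) : Layer 2 4 :=
  ⟨Matrix.of ![![1/ε, 0], ![1/ε, 0], ![1, 0], ![0, 1]],
   ![-(1/(2*ε)), -(1/(2*ε)) - 1, 0, 0]⟩

/-- Recombination layer. -/
def lB : Layer 4 2 := ⟨Matrix.of ![![-1, 1, 2, 0], ![1, -1, 0, 2]], ![0, 0]⟩

/-- Output layer: (y, s) ↦ s. -/
def lF : Layer 2 1 := ⟨Matrix.of ![![0, 1]], ![0]⟩

/-- The body of the bit-extraction network: n rounds of (lA, lB), then lF. -/
def body (ε : ℝ) : ℕ → Net 2 1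
  | 0 => .last lF
  | n+1 => .cons (lA ε) (.cons lB (body ε n))

def fullNet (ε : ℝ) (c : ℕ) : Net 1 1 := .cons lI (body ε c)

lemma lI_apply (x : ℝ) (hx : 0 ≤ x) :
    (fun i => relu (lI.affine (fun _ => x) i)) = ![x, 0] := by
  funext i
  fin_cases i <;>
    simp [lI, Layer.affine, relu, Fin.sum_univ_one, max_eq_right hx]

lemma lA_apply (ε y s : ℝ) (hy : 0 ≤ y) (hs : 0 ≤ s) :
    (fun i => relu ((lA ε).affine ![y, s] i)) =
      ![relu (1/ε * y - 1/(2*ε)), relu (1/ε * y - (1/(2*ε) + 1)), y, s] := by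
  funext i
  fin_cases i <;>
    simp [lA, Layer.affine, relu, Fin.sum_univ_succ, max_eq_right, hy, hs] <;>
    ring_nf

lemma lB_apply (a b y s : ℝ) :
    (fun i => relu (lB.affine ![a, b, y, s] i)) =
      ![relu (-a + b + 2*y), relu (a - b + 2*s)] := by
  funext i
  fin_cases i <;>
    simp [lB, Layer.affine, relu, Fin.sum_univ_succ] <;> ring_nf

/-- Goodness: at every scale the fractional part avoids the threshold window. -/
def Good (ε : ℝ) (n : ℕ) (y : ℝ) : Prop :=
  ∀ i < n, Int.fract (2^i * y) < 1/2 ∨ 1/2 + ε ≤ Int.fract (2^i * y)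

lemma good_shift0 {ε : ℝ} {n : ℕ} {y : ℝ} (h : Good ε (n+1) y) : Good ε n (2*y) := by
  intro i hi
  have := h (i+1) (by omega)
  rwa [show (2:ℝ)^(i+1) * y = 2^i * (2*y) by ring] at this

lemma good_shift1 {ε : ℝ} {n : ℕ} {y : ℝ} (h : Good ε (n+1) y) : Good ε n (2*y - 1) := by
  intro i hi
  have h2 := h (i+1) (by omega)
  have e : Int.fract ((2:ℝ)^i * (2*y - 1)) = Int.fract ((2:ℝ)^(i+1) * y) := by
    rw [show (2:ℝ)^i * (2*y - 1) = 2^(i+1) * y - ((2^i : ℤ) : ℝ) by push_cast; ring,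
      Int.fract_sub_intCast]
  rw [e]; exact h2

lemma body_eval (ε : ℝ) (hε : 0 < ε) :
    ∀ n (y s : ℝ), 0 ≤ y → y < 1 → 0 ≤ s → Good ε n y →
      (body ε n).eval ![y, s] 0 = 2^n * s + ((⌊(2:ℝ)^n * y⌋ : ℤ) : ℝ) := by
  intro n
  induction n with
  | zero =>
    intro y s hy0 hy1 _ _
    have : ⌊(2:ℝ)^0 * y⌋ = 0 := by
      rw [pow_zero, one_mul]
      exact Int.floor_eq_zero_iff.2 ⟨hy0, hy1⟩
    simp [body, Net.eval, lF, Layer.affine, Fin.sum_univ_succ, this]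
    exact ⟨hy0, hy1⟩
  | succ n ih =>
    intro y s hy0 hy1 hs hg
    have hεinv : (0:ℝ) < 1/ε := by positivity
    have hfr : Int.fract ((2:ℝ)^0 * y) = y := by
      rw [pow_zero, one_mul]; exact Int.fract_eq_self.2 ⟨hy0, hy1⟩
    have hg0 := hg 0 (by omega)
    rw [hfr] at hg0
    show (body ε n).eval
      (fun i => relu (lB.affine (fun j => relu ((lA ε).affine ![y, s] j)) i)) 0 = _
    rw [lA_apply ε y s hy0 hs, lB_apply]
    rcases hg0 with hlt | hge
    · -- bit is 0
      have ha : 1/ε * y - 1/(2*ε) ≤ 0 := by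
        have : 1/ε * y - 1/(2*ε) = (2*y - 1)/(2*ε) := by field_simp
        rw [this]
        apply div_nonpos_of_nonpos_of_nonneg <;> linarith
      have hb : 1/ε * y - (1/(2*ε) + 1) ≤ 0 := by linarith
      rw [relu_of_nonpos ha, relu_of_nonpos hb]
      have e1 : -(0:ℝ) + 0 + 2*y = 2*y := by ring
      have e2 : (0:ℝ) - 0 + 2*s = 2*s := by ring
      rw [e1, e2, relu_of_nonneg (by linarith), relu_of_nonneg (by linarith)]
      rw [ih (2*y) (2*s) (by linarith) (by linarith) (by linarith) (good_shift0 hg)]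
      rw [show (2:ℝ)^n * (2*y) = 2^(n+1) * y by ring]
      ring
    · -- bit is 1
      have ha : 0 ≤ 1/ε * y - 1/(2*ε) := by
        have : 1/ε * y - 1/(2*ε) = (2*y - 1)/(2*ε) := by field_simp
        rw [this]
        apply div_nonneg <;> linarith
      have hb : 0 ≤ 1/ε * y - (1/(2*ε) + 1) := by
        have : 1/ε * y - (1/(2*ε) + 1) = (y - (1/2 + ε))/ε := by field_simp
        rw [this]
        apply div_nonneg (by linarith) (le_of_lt hε)
      rw [relu_of_nonneg ha, relu_of_nonneg hb]
      have e1 : -(1/ε * y - 1/(2*ε)) + (1/ε * y - (1/(2*ε) + 1)) + 2*y = 2*y - 1 := by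
        ring
      have e2 : (1/ε * y - 1/(2*ε)) - (1/ε * y - (1/(2*ε) + 1)) + 2*s = 2*s + 1 := by
        ring
      rw [e1, e2, relu_of_nonneg (by linarith), relu_of_nonneg (by linarith)]
      rw [ih (2*y - 1) (2*s + 1) (by linarith) (by linarith) (by linarith)
        (good_shift1 hg)]
      have : ⌊(2:ℝ)^n * (2*y - 1)⌋ = ⌊(2:ℝ)^(n+1) * y⌋ - 2^n := by
        rw [show (2:ℝ)^n * (2*y - 1) = 2^(n+1) * y - ((2^n : ℤ) : ℝ) by push_cast; ring,
          Int.floor_sub_intCast]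
      rw [this]
      push_cast
      ring

lemma body_width (ε : ℝ) (n : ℕ) : (body ε n).width ≤ 4 := by
  induction n with
  | zero => simp [body, Net.width]
  | succ n ih => simp [body, Net.width]; omega

lemma body_depth (ε : ℝ) (n : ℕ) : (body ε n).depth = 2*n + 1 := by
  induction n with
  | zero => simp [body, Net.depth]
  | succ n ih => simp [body, Net.depth, ih]; omega

lemma body_weights (ε M : ℝ) (hε : 0 < ε) (h1 : 1/ε + 1 ≤ M) (h2 : 2 ≤ M) (n : ℕ) :
    (body ε n).weightsIn (Set.Icc (-M) M) := by
  have hεinv : (0:ℝ) < 1/ε := by positivity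
  have hhalf : 1/(2*ε) ≤ 1/ε := by
    apply one_div_le_one_div_of_le hε; linarith
  have hM0 : (0:ℝ) ≤ M := by linarith
  have k1 : (0:ℝ) < ε⁻¹ := by positivity
  have k2 : ε⁻¹ + 1 ≤ M := by rw [← one_div]; exact h1
  have k3 : (2*ε)⁻¹ ≤ ε⁻¹ := by rw [← one_div, ← one_div]; exact hhalf
  have k4 : (0:ℝ) < (2*ε)⁻¹ := by positivity
  induction n with
  | zero =>
    refine ⟨fun i j => ?_, fun i => ?_⟩ <;>
    · fin_cases i <;> try fin_cases j
      all_goals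
        simp [lF, Set.mem_Icc]
      all_goals first | linarith | (constructor <;> linarith)
  | succ n ih =>
    refine ⟨⟨fun i j => ?_, fun i => ?_⟩, ⟨fun i j => ?_, fun i => ?_⟩, ih⟩ <;>
    · fin_cases i <;> try fin_cases j
      all_goals
        simp [lA, lB, Set.mem_Icc]
      all_goals first | linarith | (constructor <;> linarith)

end Aux

open MeasureTheory

theorem stmt6 :
    ∃ c₁ c₂ : ℝ, 0 < c₁ ∧ 0 < c₂ ∧
    ∀ (c : ℕ), 0 < c → ∀ δ : ℝ, 0 < δ →
    ∃ N : Net 1 1,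
      N.width ≤ 5 ∧
      (N.depth : ℝ) ≤ c₁ * (c : ℝ) ∧
      N.weightsIn (Set.Icc (-(c₂ * 2^c / δ)) (c₂ * 2^c / δ)) ∧
      ENNReal.ofReal (1 - δ) ≤
        MeasureTheory.volume {x ∈ Set.Icc (0 : ℝ) 1 |
          N.eval (fun _ => x) 0 = ((⌊x * 2^c⌋ : ℤ) : ℝ)} := by
  refine ⟨4, 2, by norm_num, by norm_num, ?_⟩
  intro c hc δ hδ
  have hc1 : (1:ℝ) ≤ c := by exact_mod_cast hc
  set M : ℝ := 2 * 2^c / δ with hMdef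
  have hM0 : 0 < M := by positivity
  by_cases hδ1 : 1 ≤ δ
  · -- trivial network suffices
    refine ⟨.last ⟨0, 0⟩, ?_, ?_, ?_, ?_⟩
    · simp [Net.width]
    · simp only [Net.depth]
      push_cast
      linarith
    · exact ⟨fun i j => by simp [Set.mem_Icc]; first | linarith | (constructor <;> linarith),
        fun i => by simp [Set.mem_Icc]; first | linarith | (constructor <;> linarith)⟩
    · have h0 : ENNReal.ofReal (1 - δ) = 0 := ENNReal.ofReal_eq_zero.2 (by linarith)
      rw [h0]
      exact zero_le
  · push_neg at hδ1
    set ε : ℝ := δ / 2^c with hεdef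
    have h2c : (1:ℝ) ≤ 2^c := one_le_pow₀ (by norm_num : (1:ℝ) ≤ 2)
    have h2c0 : (0:ℝ) < 2^c := by positivity
    have hε0 : 0 < ε := by positivity
    have hεinv : 1/ε = 2^c/δ := by rw [hεdef, one_div_div]
    have hdq : (1:ℝ) ≤ 2^c/δ := (one_le_div hδ).2 (by linarith)
    have hMeq : M = 2 * (2^c/δ) := by rw [hMdef]; ring
    have hw1 : 1/ε + 1 ≤ M := by rw [hεinv, hMeq]; linarith
    have hw2 : 2 ≤ M := by rw [hMeq]; linarith
    refine ⟨fullNet ε c, ?_, ?_, ?_, ?_⟩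
    · have := body_width ε c
      simp only [fullNet, Net.width]
      omega
    · simp only [fullNet, Net.depth, body_depth]
      push_cast
      linarith
    · refine ⟨⟨fun i j => ?_, fun i => ?_⟩, body_weights ε M hε0 hw1 hw2 c⟩ <;>
      · fin_cases i <;> try fin_cases j
        all_goals simp [lI, Set.mem_Icc]
        all_goals first | linarith | (constructor <;> linarith)
    · -- measure bound
      set Bad : Set ℝ := ⋃ i ∈ Finset.range c, ⋃ k ∈ Finset.range (2^i),
        Set.Icc (((k:ℝ) + 1/2)/2^i) (((k:ℝ) + 1/2 + ε)/2^i) with hBad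
      set T : Set ℝ := {x ∈ Set.Icc (0 : ℝ) 1 |
          (fullNet ε c).eval (fun _ => x) 0 = ((⌊x * 2^c⌋ : ℤ) : ℝ)} with hT
      have hsub : Set.Ico (0:ℝ) 1 \ Bad ⊆ T := by
        rintro x ⟨⟨hx0, hx1⟩, hxB⟩
        have hgood : Good ε c x := by
          intro i hi
          by_contra hcon
          push_neg at hcon
          obtain ⟨hf1, hf2⟩ := hcon
          have hp : (0:ℝ) < 2^i := by positivity
          set k : ℤ := ⌊(2:ℝ)^i * x⌋ with hk
          have hk0 : 0 ≤ k := Int.floor_nonneg.2 (by positivity)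
          have hklt : k < 2^i := by
            have hxx : (2:ℝ)^i * x < 2^i * 1 := by
              exact mul_lt_mul_of_pos_left hx1 hp
            have : (2:ℝ)^i * x < ((2^i : ℤ) : ℝ) := by push_cast; linarith
            exact Int.floor_lt.2 this
          have hfr : Int.fract ((2:ℝ)^i * x) = 2^i * x - (k:ℝ) := rfl
          rw [hfr] at hf1 hf2
          apply hxB
          refine Set.mem_iUnion₂.2 ⟨i, Finset.mem_range.2 hi,
            Set.mem_iUnion₂.2 ⟨k.toNat, Finset.mem_range.2 ?_, ?_, ?_⟩⟩
          · have hcast : ((2:ℤ))^i = ((2^i : ℕ) : ℤ) := by push_cast; ring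
            rw [hcast] at hklt
            omega
          · rw [div_le_iff₀ hp]
            have hmc : x * 2^i = 2^i * x := mul_comm _ _
            have hck : ((k.toNat : ℕ) : ℝ) = (k:ℝ) := by
              exact_mod_cast congrArg (Int.cast : ℤ → ℝ) (Int.toNat_of_nonneg hk0)
            linarith [hck]
          · rw [le_div_iff₀ hp]
            have hmc : x * 2^i = 2^i * x := mul_comm _ _
            have hck : ((k.toNat : ℕ) : ℝ) = (k:ℝ) := by
              exact_mod_cast congrArg (Int.cast : ℤ → ℝ) (Int.toNat_of_nonneg hk0)
            linarith [hck]
        have heval : (fullNet ε c).eval (fun _ => x) 0 = ((⌊x * 2^c⌋ : ℤ) : ℝ) := by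
          have e0 : (fullNet ε c).eval (fun _ => x) =
              (body ε c).eval (fun i => relu (lI.affine (fun _ => x) i)) := rfl
          rw [e0, lI_apply x hx0,
            body_eval ε hε0 c x 0 hx0 hx1 le_rfl hgood,
            show x * 2^c = (2:ℝ)^c * x from mul_comm _ _]
          ring
        exact ⟨⟨hx0, hx1.le⟩, heval⟩
      have hBadVol : volume Bad ≤ ENNReal.ofReal δ := by
        have step1 : volume Bad ≤
            ∑ i ∈ Finset.range c, ENNReal.ofReal ε := by
          refine le_trans (measure_biUnion_finset_le _ _) (Finset.sum_le_sum ?_)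
          intro i _
          have hp : (0:ℝ) < 2^i := by positivity
          refine le_trans (measure_biUnion_finset_le _ _) ?_
          have hvol : ∀ k ∈ Finset.range (2^i),
              volume (Set.Icc (((k:ℝ) + 1/2)/2^i) (((k:ℝ) + 1/2 + ε)/2^i)) =
                ENNReal.ofReal (ε/2^i) := by
            intro k _
            rw [Real.volume_Icc]
            congr 1
            field_simp
            ring
          rw [Finset.sum_congr rfl hvol, Finset.sum_const, Finset.card_range,
            nsmul_eq_mul]
          have hcast : ((2^i : ℕ) : ENNReal) = ENNReal.ofReal ((2:ℝ)^i) := by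
            rw [show ((2:ℝ)^i) = ((2^i : ℕ) : ℝ) by push_cast; ring,
              ENNReal.ofReal_natCast]
          rw [hcast, ← ENNReal.ofReal_mul (by positivity),
            mul_div_cancel₀ _ (ne_of_gt hp)]
        refine le_trans step1 ?_
        rw [Finset.sum_const, Finset.card_range, nsmul_eq_mul,
          show ((c:ℕ) : ENNReal) = ENNReal.ofReal ((c:ℕ) : ℝ) by
            rw [ENNReal.ofReal_natCast],
          ← ENNReal.ofReal_mul (by positivity)]
        apply ENNReal.ofReal_le_ofReal
        have hcp : (c:ℝ) ≤ 2^c := by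
          have := Nat.lt_two_pow_self (n := c)
          exact_mod_cast this.le
        rw [hεdef]
        calc (c:ℝ) * (δ/2^c) = (c/2^c) * δ := by ring
          _ ≤ 1 * δ := by
              apply mul_le_mul_of_nonneg_right _ hδ.le
              rw [div_le_one h2c0]; exact hcp
          _ = δ := one_mul δ
      have hone : (1 : ENNReal) ≤ volume T + ENNReal.ofReal δ := by
        have hIco : volume (Set.Ico (0:ℝ) 1) = 1 := by
          rw [Real.volume_Ico]; norm_num
        have hsplit : volume (Set.Ico (0:ℝ) 1) ≤
            volume (Set.Ico (0:ℝ) 1 \ Bad) + volume Bad := by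
          refine le_trans (measure_mono ?_) (measure_union_le _ _)
          intro x hx
          by_cases hB : x ∈ Bad
          · exact Or.inr hB
          · exact Or.inl ⟨hx, hB⟩
        calc (1 : ENNReal) = volume (Set.Ico (0:ℝ) 1) := hIco.symm
          _ ≤ volume (Set.Ico (0:ℝ) 1 \ Bad) + volume Bad := hsplit
          _ ≤ volume T + ENNReal.ofReal δ :=
              add_le_add (measure_mono hsub) hBadVol
      have hkey : ENNReal.ofReal (1 - δ) + ENNReal.ofReal δ ≤
          volume T + ENNReal.ofReal δ := by
        rw [← ENNReal.ofReal_add (by linarith) hδ.le]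
        calc ENNReal.ofReal (1 - δ + δ) = 1 := by norm_num
          _ ≤ volume T + ENNReal.ofReal δ := hone
      exact (ENNReal.add_le_add_iff_right ENNReal.ofReal_ne_top).1 hkey
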